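/- In the category of groupoids, every functor that is injective on objects and an equivalence has the left lifting property with respect to every isofibration. -/

import Mathlib

/-!
An injective-on-objects equivalence `i : A ⥤ B` has a retraction `r` (`i ⋙ r = 𝟭 A`) together
with an isomorphism `ε : r ⋙ i ≅ 𝟭 B` that is the identity on the image of `i`: send objects in
the image back to their unique preimage and choose any preimage up to isomorphism elsewhere.
Given a square `f ≫ p = i ≫ g`, the functor `r ⋙ f` restricts to `f` along `i`, and `ε` induces
an isomorphism `(r ⋙ f) ⋙ p ≅ g`. Lifting its components through the isofibration `p`, with
identity lifts wherever the component is an identity, and transporting `r ⋙ f` along these lifts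
gives a functor `L` with `L ⋙ p = g` that still restricts to `f` along `i`.
-/

open CategoryTheory

/-- A functor is an isofibration if every isomorphism with source in its image
lifts to an isomorphism with prescribed source. -/
def IsIsofibration {A B : Type*} [Category A] [Category B] (F : A ⥤ B) : Prop :=
  ∀ (a : A) (b : B) (e : F.obj a ≅ b), ∃ (a' : A) (α : a ≅ a') (h : F.obj a' = b),
    F.map α.hom ≫ eqToHom h = e.hom

namespace CategoryTheory.Functor

variable {A B : Type*} [Category A] [Category B] (i : A ⥤ B)

theorem exists_iso_obj_eqToHom_of_obj_eq [i.EssSurj] (b : B) :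
    ∃ (a : A) (η : i.obj a ≅ b), ∀ a₀, i.obj a₀ = b → ∃ h, η.hom = eqToHom h := by
  by_cases hb : ∃ a₀, i.obj a₀ = b
  · obtain ⟨a₀, rfl⟩ := hb
    exact ⟨a₀, Iso.refl _, fun _ _ => ⟨rfl, rfl⟩⟩
  · exact ⟨i.objPreimage b, i.objObjPreimageIso b, fun a₀ h => (hb ⟨a₀, h⟩).elim⟩

section InvOfIsos

variable [i.Full] [i.Faithful] (a : B → A) (η : ∀ b, i.obj (a b) ≅ b)

noncomputable def invOfIsos : B ⥤ A where
  obj := a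
  map {b b'} β := i.preimage ((η b).hom ≫ β ≫ (η b').inv)
  map_id b := i.map_injective (by simp)
  map_comp β γ := i.map_injective (by simp)

noncomputable def invOfIsosCompIso : invOfIsos i a η ⋙ i ≅ 𝟭 B :=
  NatIso.ofComponents η fun β => by simp [invOfIsos]

end InvOfIsos

theorem exists_retraction_of_injective_obj [i.IsEquivalence] (hinj : Function.Injective i.obj) :
    ∃ (r : B ⥤ A) (ε : r ⋙ i ≅ 𝟭 B), i ⋙ r = 𝟭 A ∧
      ∀ a, ∃ h, ε.hom.app (i.obj a) = eqToHom h := by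
  choose a η hη using i.exists_iso_obj_eqToHom_of_obj_eq
  choose hia hηi using fun a₀ => hη (i.obj a₀) a₀ rfl
  refine ⟨invOfIsos i a η, invOfIsosCompIso i a η, ?_, fun a₀ => ⟨hia a₀, hηi a₀⟩⟩
  refine Functor.ext_of_iso (NatIso.ofComponents (fun a₀ => i.preimageIso (η (i.obj a₀)))
    fun u => i.map_injective (by simp [invOfIsos])) (fun a₀ => hinj (hia a₀)) fun a₀ => ?_
  apply i.map_injective
  change i.map (i.preimage (η (i.obj a₀)).hom) = _
  rw [map_preimage, hηi, eqToHom_map]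
  rfl

end CategoryTheory.Functor

namespace IsIsofibration

variable {B E D : Type*} [Category B] [Category E] [Category D] {p : E ⥤ D}

theorem exists_lift_eqToHom_of_eqToHom (hp : IsIsofibration p) {x : E} {d : D}
    (e : p.obj x ≅ d) :
    ∃ (x' : E) (α : x ≅ x') (h : p.obj x' = d), p.map α.hom ≫ eqToHom h = e.hom ∧
      ∀ h₀ : p.obj x = d, e.hom = eqToHom h₀ → ∃ hx : x = x', α.hom = eqToHom hx := by
  by_cases he : ∃ h₀ : p.obj x = d, e.hom = eqToHom h₀
  · obtain ⟨h₀, he⟩ := he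
    exact ⟨x, Iso.refl x, h₀, by simp [he], fun _ _ => ⟨rfl, rfl⟩⟩
  · obtain ⟨x', α, h, hα⟩ := hp x d e
    exact ⟨x', α, h, hα, fun h₀ h₀' => (he ⟨h₀, h₀'⟩).elim⟩

theorem exists_lift_of_iso_comp (hp : IsIsofibration p) {A : Type*} [Category A] (i : A ⥤ B)
    {F : B ⥤ E} {G : B ⥤ D} (φ : F ⋙ p ≅ G)
    (hφ : ∀ a, ∃ h, φ.hom.app (i.obj a) = eqToHom h) :
    ∃ F' : B ⥤ E, F' ⋙ p = G ∧ i ⋙ F' = i ⋙ F := by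
  choose x α hx hαφ hα using fun b => hp.exists_lift_eqToHom_of_eqToHom (φ.app b)
  simp only [Iso.app_hom] at hαφ hα
  refine ⟨F.copyObj x α, Functor.ext_of_iso
    (Functor.isoWhiskerRight (F.isoCopyObj x α).symm p ≪≫ φ) hx fun b => ?_, ?_⟩
  · change p.map (α b).inv ≫ φ.hom.app b = eqToHom (hx b)
    simp [← hαφ b]
  · choose hobj hαi using fun a => hα _ _ (hφ a).choose_spec
    exact (Functor.ext_of_iso (Functor.isoWhiskerLeft i (F.isoCopyObj x α)) hobj hαi).symm

end IsIsofibration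

/-- In the category of groupoids, every injective-on-objects equivalence has
the left lifting property with respect to every isofibration. -/
theorem injective_equivalence_llp_isofibration
    {A B E D : Grpd} (i : A ⟶ B) (p : E ⟶ D)
    (hinj : Function.Injective i.obj) (heq : i.IsEquivalence)
    (hfib : IsIsofibration p) :
    HasLiftingProperty i p := by
  obtain ⟨r, ε, hir, hε⟩ := i.exists_retraction_of_injective_obj hinj
  refine ⟨fun {f g} sq => ?_⟩
  let φ : (r ⋙ f) ⋙ p ≅ g :=
    Functor.isoWhiskerLeft r (eqToIso sq.w) ≪≫ Functor.isoWhiskerRight ε g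
  obtain ⟨L, hLp, hiL⟩ := hfib.exists_lift_of_iso_comp i φ fun a => by
    obtain ⟨h, hεa⟩ := hε a
    exact ⟨(Functor.congr_obj sq.w (r.obj (i.obj a))).trans (congrArg g.obj h),
      by simp [φ, hεa, eqToHom_map]⟩
  have hirf : i ⋙ r ⋙ f = f := by rw [← Functor.assoc, hir]; rfl
  exact ⟨⟨⟨L, hiL.trans hirf, hLp⟩⟩⟩
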